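/- Let (k_n) satisfy k_n/(ln n)⁴ → ∞. Define H_k(ε) = exp(−k·ε^{2/3}(d+2)^{−4/3}/(d²(k^{1/3} + (d+2)^{1/3}ε^{1/3})²)), R_k(ε) = exp(−k^{1/3}ε^{2/3}/(d²(d+2)^{4/3})), and G_k(t) = min_{ε∈[0,t]}((2e³/9)F_d(t−ε) + (d²+d)H_k(ε) + 2d·R_k(ε)), where F_d is the chi-square(d) upper tail. Then for every λ > 4, the series ∑_n n·G_{k_n}(λ·ln n) converges. -/

import Mathlib

open MeasureTheory Filter
open scoped Topology

noncomputable section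

/-- The upper tail `F_d(x) = P(χ²(d) > x)` of the chi-square distribution with `d` degrees
of freedom. -/
def chiSqTail (d : ℕ) (x : ℝ) : ℝ :=
  ∫ y in Set.Ioi x, y ^ ((d : ℝ) / 2 - 1) * Real.exp (-y / 2) /
    (2 ^ ((d : ℝ) / 2) * Real.Gamma ((d : ℝ) / 2))

/-- The function `H_k(ε)` of the paper. -/
def Hfun (d k : ℕ) (ε : ℝ) : ℝ :=
  Real.exp (-((k : ℝ) * ε ^ ((2 : ℝ) / 3) * ((d : ℝ) + 2) ^ (-(4 : ℝ) / 3)) /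
    ((d : ℝ) ^ 2 * ((k : ℝ) ^ ((1 : ℝ) / 3) + ((d : ℝ) + 2) ^ ((1 : ℝ) / 3) * ε ^ ((1 : ℝ) / 3)) ^ 2))

/-- The function `R_k(ε)` of the paper. -/
def Rfun (d k : ℕ) (ε : ℝ) : ℝ :=
  Real.exp (-((k : ℝ) ^ ((1 : ℝ) / 3) * ε ^ ((2 : ℝ) / 3)) /
    ((d : ℝ) ^ 2 * ((d : ℝ) + 2) ^ ((4 : ℝ) / 3)))

/-- The function `G_k(t)` of the paper: minimum over `ε ∈ [0,t]` of
`(2e³/9)F_d(t−ε) + (d²+d)H_k(ε) + 2d R_k(ε)`. -/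
def Gfun (d k : ℕ) (t : ℝ) : ℝ :=
  sInf ((fun ε => (2 * Real.exp 3 / 9) * chiSqTail d (t - ε) +
    ((d : ℝ) ^ 2 + d) * Hfun d k ε + 2 * d * Rfun d k ε) '' Set.Icc 0 t)

/-!
Take `ε = ε₁ ln n` with `ε₁ = (λ - 4)/2`, so that `t - ε = μ ln n` with `μ > 4`. The chi-square
tail decays like `e^{-cx}` for every `c < 1/2`; choosing `c ∈ (2/μ, 1/2)` gives
`F_d(μ ln n) = O(n^{-r})` with `r = cμ > 2`. Once `ε ≤ k`, both `H_k(ε)` and `R_k(ε)` are at most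
`exp(-k^{1/3} ε^{2/3}/κ_d)`, and `k_n ≥ (ln n)⁴` turns this into `exp(-b (ln n)²)`, which beats
every power of `n`. Hence `n G_{k_n}(λ ln n) = O(n^{1-r})` is summable.
-/

open Real Asymptotics

lemma tendsto_log_natCast_atTop : Tendsto (fun n : ℕ => log n) atTop atTop :=
  tendsto_log_atTop.comp tendsto_natCast_atTop_atTop

lemma eventually_le_of_tendsto_div_atTop {α : Type*} {l : Filter α} {f g : α → ℝ}
    (h : Tendsto (fun x => f x / g x) l atTop) (hg : ∀ᶠ x in l, 0 < g x) :
    ∀ᶠ x in l, g x ≤ f x := by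
  filter_upwards [h.eventually_ge_atTop 1, hg] with x hx hgx
  exact (one_le_div hgx).1 hx

lemma summable_natCast_mul_of_isBigO_rpow {f : ℕ → ℝ} {r : ℝ} (hr : 2 < r)
    (hf : f =O[atTop] fun n => (n : ℝ) ^ (-r)) : Summable fun n : ℕ => (n : ℝ) * f n := by
  refine summable_of_isBigO_nat (Real.summable_nat_rpow.2 (show 1 - r < -1 by linarith)) ?_
  refine ((isBigO_refl (fun n : ℕ => (n : ℝ)) atTop).mul hf).congr_right fun n => ?_
  rw [sub_eq_add_neg, rpow_add' (Nat.cast_nonneg n) (by linarith), rpow_one]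

lemma chiSqTail_nonneg (d : ℕ) {x : ℝ} (hx : 0 ≤ x) : 0 ≤ chiSqTail d x :=
  setIntegral_nonneg measurableSet_Ioi fun y hy => by
    have : 0 ≤ y := hx.trans hy.le
    positivity

lemma chiSqTail_isBigO_exp (d : ℕ) {c : ℝ} (hc : 0 < c) (hc2 : c < 1 / 2) :
    chiSqTail d =O[atTop] fun x => exp (-c * x) := by
  set A : ℝ := 2 ^ ((d : ℝ) / 2) * Gamma ((d : ℝ) / 2)
  have hA : 0 ≤ A⁻¹ := by positivity
  obtain ⟨Y, hY⟩ := eventually_atTop.1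
    ((isLittleO_rpow_exp_pos_mul_atTop ((d : ℝ) / 2 - 1) (sub_pos.2 hc2)).bound one_pos)
  have hdensity : ∀ y, max Y 0 ≤ y →
      y ^ ((d : ℝ) / 2 - 1) * exp (-y / 2) / A ≤ A⁻¹ * exp (-c * y) := by
    intro y hy
    have hpow := hY y (le_of_max_le_left hy)
    rw [one_mul, norm_of_nonneg (rpow_nonneg (le_of_max_le_right hy) _),
      norm_of_nonneg (exp_pos _).le] at hpow
    calc y ^ ((d : ℝ) / 2 - 1) * exp (-y / 2) / A
        = A⁻¹ * (y ^ ((d : ℝ) / 2 - 1) * exp (-y / 2)) := by ring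
      _ ≤ A⁻¹ * (exp ((1 / 2 - c) * y) * exp (-y / 2)) := by gcongr
      _ = A⁻¹ * exp (-c * y) := by rw [← exp_add]; ring_nf
  refine IsBigO.of_bound (A⁻¹ / c) ?_
  filter_upwards [eventually_ge_atTop (max Y 0)] with x hx
  have hx0 : 0 ≤ x := le_of_max_le_right hx
  rw [norm_of_nonneg (chiSqTail_nonneg d hx0), norm_of_nonneg (exp_pos _).le]
  calc chiSqTail d x ≤ ∫ y in Set.Ioi x, A⁻¹ * exp (-c * y) := by
        refine integral_mono_of_nonneg
          (ae_restrict_of_forall_mem measurableSet_Ioi fun y hy => ?_)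
          ((integrableOn_exp_mul_Ioi (neg_neg_of_pos hc) x).const_mul _)
          (ae_restrict_of_forall_mem measurableSet_Ioi fun y hy => hdensity y (hx.trans hy.le))
        have : 0 ≤ y := hx0.trans (le_of_lt hy)
        positivity
    _ = A⁻¹ / c * exp (-c * x) := by
        rw [integral_const_mul, integral_exp_mul_Ioi (neg_neg_of_pos hc)]
        field_simp

lemma chiSqTail_mul_log_isBigO (d : ℕ) {μ c : ℝ} (hμ : 0 < μ) (hc : 0 < c) (hc2 : c < 1 / 2) :
    (fun n : ℕ => chiSqTail d (μ * log n)) =O[atTop] fun n => (n : ℝ) ^ (-(c * μ)) := by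
  refine ((chiSqTail_isBigO_exp d hc hc2).comp_tendsto
    (tendsto_log_natCast_atTop.const_mul_atTop hμ)).congr' EventuallyEq.rfl ?_
  filter_upwards [eventually_gt_atTop 0] with n hn
  rw [Function.comp_apply, rpow_def_of_pos (Nat.cast_pos.2 hn)]
  ring_nf

lemma Hfun_pos (d k : ℕ) (ε : ℝ) : 0 < Hfun d k ε := exp_pos _

lemma Rfun_pos (d k : ℕ) (ε : ℝ) : 0 < Rfun d k ε := exp_pos _

def expRateConst (d : ℕ) : ℝ :=
  (d : ℝ) ^ 2 * (1 + ((d : ℝ) + 2) ^ (1 / 3 : ℝ)) ^ 2 * ((d : ℝ) + 2) ^ (4 / 3 : ℝ)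

lemma Rfun_le_exp {d : ℕ} (hd : 0 < d) (k : ℕ) {ε : ℝ} (hε : 0 ≤ ε) :
    Rfun d k ε ≤ exp (-((k : ℝ) ^ (1 / 3 : ℝ) * ε ^ (2 / 3 : ℝ) / expRateConst d)) := by
  unfold Rfun expRateConst
  have hd' : (0 : ℝ) < d := Nat.cast_pos.2 hd
  rw [exp_le_exp, neg_div, neg_le_neg_iff]
  gcongr
  refine le_mul_of_one_le_right (by positivity) (one_le_pow₀ ?_)
  exact le_add_of_nonneg_right (by positivity)

lemma Hfun_le_exp {d k : ℕ} (hd : 0 < d) {ε : ℝ} (hε : 0 < ε) (hεk : ε ≤ k) :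
    Hfun d k ε ≤ exp (-((k : ℝ) ^ (1 / 3 : ℝ) * ε ^ (2 / 3 : ℝ) / expRateConst d)) := by
  unfold Hfun expRateConst
  set u := (k : ℝ) ^ (1 / 3 : ℝ)
  set p := ((d : ℝ) + 2) ^ (1 / 3 : ℝ)
  have hd' : (0 : ℝ) < d := Nat.cast_pos.2 hd
  have hu : 0 < u := rpow_pos_of_pos (hε.trans_le hεk) _
  have hk : (k : ℝ) = u ^ 3 := by
    rw [← rpow_natCast, ← rpow_mul (Nat.cast_nonneg k)]; norm_num
  have hS : u + p * ε ^ (1 / 3 : ℝ) ≤ (1 + p) * u := by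
    have : ε ^ (1 / 3 : ℝ) ≤ u := rpow_le_rpow hε.le hεk (by norm_num)
    nlinarith [rpow_nonneg (show (0 : ℝ) ≤ d + 2 by positivity) (1 / 3 : ℝ)]
  have hP : ((d : ℝ) + 2) ^ (-4 / 3 : ℝ) = (((d : ℝ) + 2) ^ (4 / 3 : ℝ))⁻¹ := by
    rw [← rpow_neg (by positivity)]; norm_num
  rw [exp_le_exp, neg_div, neg_le_neg_iff, hP, hk]
  calc u * ε ^ (2 / 3 : ℝ) / ((d : ℝ) ^ 2 * (1 + p) ^ 2 * ((d : ℝ) + 2) ^ (4 / 3 : ℝ))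
      = u ^ 3 * ε ^ (2 / 3 : ℝ) * (((d : ℝ) + 2) ^ (4 / 3 : ℝ))⁻¹ /
          ((d : ℝ) ^ 2 * ((1 + p) * u) ^ 2) := by
        field_simp
    _ ≤ _ := by gcongr

lemma rpow_two_thirds_mul_sq_le {k L a : ℝ} (hL : 0 ≤ L) (ha : 0 ≤ a) (hk : L ^ 4 ≤ k) :
    a ^ (2 / 3 : ℝ) * L ^ 2 ≤ k ^ (1 / 3 : ℝ) * (a * L) ^ (2 / 3 : ℝ) := by
  have hL4 : L ^ (4 / 3 : ℝ) ≤ k ^ (1 / 3 : ℝ) := by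
    calc L ^ (4 / 3 : ℝ) = (L ^ 4) ^ (1 / 3 : ℝ) := by
          rw [← rpow_natCast, ← rpow_mul hL]; norm_num
      _ ≤ k ^ (1 / 3 : ℝ) := by gcongr
  calc a ^ (2 / 3 : ℝ) * L ^ 2 = a ^ (2 / 3 : ℝ) * (L ^ (4 / 3 : ℝ) * L ^ (2 / 3 : ℝ)) := by
        rw [← rpow_add' hL (by norm_num)]; norm_num
    _ ≤ a ^ (2 / 3 : ℝ) * (k ^ (1 / 3 : ℝ) * L ^ (2 / 3 : ℝ)) := by gcongr
    _ = k ^ (1 / 3 : ℝ) * (a * L) ^ (2 / 3 : ℝ) := by rw [mul_rpow ha hL]; ring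

lemma eventually_exp_neg_rate_le_rpow {d : ℕ} (hd : 0 < d) {k : ℕ → ℕ}
    (hk : ∀ᶠ n : ℕ in atTop, log n ^ 4 ≤ k n) {a : ℝ} (ha : 0 < a) (r : ℝ) :
    ∀ᶠ n : ℕ in atTop, exp (-((k n : ℝ) ^ (1 / 3 : ℝ) * (a * log n) ^ (2 / 3 : ℝ) /
      expRateConst d)) ≤ (n : ℝ) ^ (-r) := by
  have hκ : 0 < expRateConst d := by unfold expRateConst; positivity
  set b := a ^ (2 / 3 : ℝ) / expRateConst d
  have hb : 0 < b := by positivity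
  filter_upwards [hk, tendsto_log_natCast_atTop.eventually_ge_atTop (max (r / b) 0),
    eventually_gt_atTop 0] with n hkn hL hn
  have hL0 : 0 ≤ log n := le_of_max_le_right hL
  rw [rpow_def_of_pos (Nat.cast_pos.2 hn), exp_le_exp, mul_neg, neg_le_neg_iff]
  calc log n * r ≤ log n * (log n * b) :=
        mul_le_mul_of_nonneg_left ((div_le_iff₀ hb).1 (le_of_max_le_left hL)) hL0
    _ = a ^ (2 / 3 : ℝ) * log n ^ 2 / expRateConst d := by ring
    _ ≤ _ := div_le_div_of_nonneg_right (rpow_two_thirds_mul_sq_le hL0 ha.le hkn) hκ.le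

lemma Hfun_mul_log_isBigO {d : ℕ} (hd : 0 < d) {k : ℕ → ℕ}
    (hk : ∀ᶠ n : ℕ in atTop, log n ^ 4 ≤ k n) {a : ℝ} (ha : 0 < a) (r : ℝ) :
    (fun n : ℕ => Hfun d (k n) (a * log n)) =O[atTop] fun n => (n : ℝ) ^ (-r) := by
  refine Filter.Eventually.isBigO ?_
  filter_upwards [eventually_exp_neg_rate_le_rpow hd hk ha r, hk,
    tendsto_log_natCast_atTop.eventually_ge_atTop (max a 1)] with n hexp hkn hL
  have hLa : a ≤ log n := le_of_max_le_left hL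
  have hL1 : 1 ≤ log n := le_of_max_le_right hL
  have haL : a * log n ≤ k n := by
    calc a * log n ≤ log n * log n ^ 3 := by gcongr; exact le_self_pow₀ hL1 (by norm_num)
      _ = log n ^ 4 := by ring
      _ ≤ k n := hkn
  rw [norm_of_nonneg (Hfun_pos d _ _).le]
  exact (Hfun_le_exp hd (by positivity) haL).trans hexp

lemma Rfun_mul_log_isBigO {d : ℕ} (hd : 0 < d) {k : ℕ → ℕ}
    (hk : ∀ᶠ n : ℕ in atTop, log n ^ 4 ≤ k n) {a : ℝ} (ha : 0 < a) (r : ℝ) :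
    (fun n : ℕ => Rfun d (k n) (a * log n)) =O[atTop] fun n => (n : ℝ) ^ (-r) := by
  refine Filter.Eventually.isBigO ?_
  filter_upwards [eventually_exp_neg_rate_le_rpow hd hk ha r] with n hexp
  rw [norm_of_nonneg (Rfun_pos d _ _).le]
  have : 0 ≤ log n := log_natCast_nonneg n
  exact (Rfun_le_exp hd _ (by positivity)).trans hexp

lemma Gfun_le (d k : ℕ) {t ε : ℝ} (hε : ε ∈ Set.Icc 0 t) :
    Gfun d k t ≤ (2 * exp 3 / 9) * chiSqTail d (t - ε) +
      ((d : ℝ) ^ 2 + d) * Hfun d k ε + 2 * d * Rfun d k ε := by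
  refine csInf_le ⟨0, ?_⟩ (Set.mem_image_of_mem _ hε)
  rintro _ ⟨e, he, rfl⟩
  have := chiSqTail_nonneg d (sub_nonneg.2 he.2)
  have := Hfun_pos d k e
  have := Rfun_pos d k e
  positivity

lemma Gfun_nonneg (d k : ℕ) (t : ℝ) : 0 ≤ Gfun d k t := by
  refine Real.sInf_nonneg ?_
  rintro _ ⟨e, he, rfl⟩
  have := chiSqTail_nonneg d (sub_nonneg.2 he.2)
  have := Hfun_pos d k e
  have := Rfun_pos d k e
  positivity

/-- If `k_n/(ln n)⁴ → ∞`, then for every `λ > 4` the series `∑ n G_{k_n}(λ ln n)` converges. -/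
theorem summable_n_mul_G (d : ℕ) (hd : 1 ≤ d) (k : ℕ → ℕ)
    (hk : Tendsto (fun n => (k n : ℝ) / (Real.log n) ^ 4) atTop atTop)
    (lam : ℝ) (hlam : 4 < lam) :
    Summable (fun (n : ℕ) => (n : ℝ) * Gfun d (k n) (lam * Real.log n)) := by
  set ε₁ := (lam - 4) / 2 with hε₁_def
  set μ := lam - ε₁ with hμ_def
  have hε₁ : 0 < ε₁ := by positivity
  have hμ : 4 < μ := by linarith
  obtain ⟨c, hc, hc2⟩ := exists_between (show 2 / μ < 1 / 2 by rw [div_lt_div_iff₀] <;> linarith)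
  have hc0 : 0 < c := lt_trans (by positivity) hc
  have hr : 2 < c * μ := (div_lt_iff₀ (by linarith)).1 hc
  have hk4 : ∀ᶠ n : ℕ in atTop, log n ^ 4 ≤ k n :=
    eventually_le_of_tendsto_div_atTop hk
      (tendsto_log_natCast_atTop.eventually_gt_atTop 0 |>.mono fun n hn => by positivity)
  refine summable_natCast_mul_of_isBigO_rpow hr (IsBigO.trans ?_
    (((chiSqTail_mul_log_isBigO d (by linarith) hc0 hc2).const_mul_left (2 * exp 3 / 9)).add
      ((Hfun_mul_log_isBigO hd hk4 hε₁ _).const_mul_left ((d : ℝ) ^ 2 + d)) |>.add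
      ((Rfun_mul_log_isBigO hd hk4 hε₁ _).const_mul_left (2 * d))))
  refine Filter.Eventually.isBigO (Eventually.of_forall fun n => ?_)
  have hL : 0 ≤ log n := log_natCast_nonneg n
  have hε : ε₁ * log n ∈ Set.Icc 0 (lam * log n) := ⟨by positivity, by gcongr; linarith⟩
  rw [norm_of_nonneg (Gfun_nonneg _ _ _)]
  simpa only [← sub_mul] using Gfun_le d (k n) hε
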